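/- For discrete probability distributions P and Q on a finite set U with Q(i) > 0 for all i in U, the Kullback–Leibler divergence satisfies D(P‖Q) ≥ (1/2) ∑_{i∈U} (P(i) − Q(i))². -/

import Mathlib

/-!
Summing a pointwise bound `x log (x / y) ≥ (x - y) + (x - y)² / 2` for `x, y ∈ [0, 1]`, the
linear terms cancel because `P` and `Q` both have total mass one. For `x ≤ y` the pointwise bound
comes from `log t ≥ (t - t⁻¹) / 2` on `(0, 1]`, i.e. `s ≤ sinh s` for `s = -log t`; for `y < x` it
comes from the first two terms of the series `-log (1 - a) = ∑ aⁿ / n`, with `a = 1 - y / x`.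
-/

open Finset Real

theorem sub_inv_div_two_le_log {t : ℝ} (ht : 0 < t) (ht1 : t ≤ 1) : (t - t⁻¹) / 2 ≤ log t := by
  have hs : 0 ≤ log t⁻¹ := log_nonneg (one_le_inv_iff₀.2 ⟨ht, ht1⟩)
  have := self_le_sinh_iff.2 hs
  rw [sinh_eq, exp_log (inv_pos.2 ht), exp_neg, exp_log (inv_pos.2 ht), inv_inv, log_inv] at this
  linarith

theorem add_sq_div_two_le_neg_log_one_sub {a : ℝ} (ha : 0 ≤ a) (ha1 : a < 1) :
    a + a ^ 2 / 2 ≤ -log (1 - a) := by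
  have hsum := hasSum_pow_div_log_of_abs_lt_one (abs_lt.2 ⟨by linarith, ha1⟩)
  have := sum_le_hasSum (range 2) (fun n _ => by positivity) hsum
  norm_num [sum_range_succ] at this
  linarith

theorem sub_add_sq_div_two_le_mul_log_div_of_le {x y : ℝ} (hx : 0 < x) (hxy : x ≤ y)
    (hy1 : y ≤ 1) : (x - y) + (x - y) ^ 2 / 2 ≤ x * log (x / y) := by
  have hy : 0 < y := hx.trans_le hxy
  have hlog := sub_inv_div_two_le_log (div_pos hx hy) ((div_le_one hy).2 hxy)
  calc (x - y) + (x - y) ^ 2 / 2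
      ≤ (x - y) + (x - y) ^ 2 / 2 + (x - y) ^ 2 * (1 - y) / (2 * y) := by
        have : 0 ≤ (x - y) ^ 2 * (1 - y) / (2 * y) :=
          div_nonneg (mul_nonneg (sq_nonneg _) (by linarith)) (by linarith)
        linarith
    _ = x * ((x / y - (x / y)⁻¹) / 2) := by field_simp; ring
    _ ≤ x * log (x / y) := mul_le_mul_of_nonneg_left hlog hx.le

theorem sub_add_sq_div_two_le_mul_log_div_of_lt {x y : ℝ} (hy : 0 < y) (hyx : y < x)
    (hx1 : x ≤ 1) : (x - y) + (x - y) ^ 2 / 2 ≤ x * log (x / y) := by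
  have hx : 0 < x := hy.trans hyx
  have hlog := add_sq_div_two_le_neg_log_one_sub (a := (x - y) / x)
    (div_nonneg (by linarith) hx.le) ((div_lt_one hx).2 (by linarith))
  rw [show 1 - (x - y) / x = (x / y)⁻¹ by field_simp; ring, log_inv, neg_neg] at hlog
  calc (x - y) + (x - y) ^ 2 / 2
      ≤ (x - y) + (x - y) ^ 2 / (2 * x) := by
        gcongr
        linarith
    _ = x * ((x - y) / x + ((x - y) / x) ^ 2 / 2) := by field_simp
    _ ≤ x * log (x / y) := mul_le_mul_of_nonneg_left hlog hx.le

theorem sub_add_sq_div_two_le_mul_log_div {x y : ℝ} (hx : 0 ≤ x) (hx1 : x ≤ 1) (hy : 0 < y)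
    (hy1 : y ≤ 1) : (x - y) + (x - y) ^ 2 / 2 ≤ x * log (x / y) := by
  rcases hx.eq_or_lt with rfl | hx
  · simp only [zero_sub, even_two, Even.neg_pow, zero_div, log_zero, mul_zero]
    nlinarith
  rcases le_or_gt x y with hxy | hyx
  · exact sub_add_sq_div_two_le_mul_log_div_of_le hx hxy hy1
  · exact sub_add_sq_div_two_le_mul_log_div_of_lt hy hyx hx1

/-- Pinsker-type lower bound: for pmfs `P`, `Q` on a finite set `U` with `Q` positive on `U`,
`D(P‖Q) ≥ (1/2) ∑ (P i - Q i)^2`. -/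
theorem kl_ge_half_sum_sq {ι : Type*} (U : Finset ι) (P Q : ι → ℝ)
    (hPnn : ∀ i ∈ U, 0 ≤ P i) (hPsum : ∑ i ∈ U, P i = 1)
    (hQpos : ∀ i ∈ U, 0 < Q i) (hQsum : ∑ i ∈ U, Q i = 1) :
    ∑ i ∈ U, P i * Real.log (P i / Q i) ≥ (1 / 2) * ∑ i ∈ U, (P i - Q i) ^ 2 := by
  have hP1 : ∀ i ∈ U, P i ≤ 1 := fun i hi => hPsum ▸ single_le_sum hPnn hi
  have hQ1 : ∀ i ∈ U, Q i ≤ 1 := fun i hi =>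
    hQsum ▸ single_le_sum (fun j hj => (hQpos j hj).le) hi
  have hpointwise := sum_le_sum fun i hi =>
    sub_add_sq_div_two_le_mul_log_div (hPnn i hi) (hP1 i hi) (hQpos i hi) (hQ1 i hi)
  rw [sum_add_distrib, sum_sub_distrib, hPsum, hQsum, ← sum_div] at hpointwise
  linarith
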